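/- Let A ∈ ℝ^{m×n} with columns partitioned into V_1,…,V_k, and suppose C ∈ ℝ^{m×r} satisfies C C† ⪰ C_i C_i† in the sense that ‖(I_m − CC†)V_i‖_F ≤ ‖(I_m − C_i C_i†)V_i‖_F for each i, where C_i are the columns of C lying in V_i (each C_i full column rank d_i). Then ‖(I_m − CC†)A‖_F² ≤ Σ_{i=1}^k ( ‖(I_m − Û_i Û_i^T)V_i‖_F · (1 + ‖C_i†‖₂ ‖V_i‖₂) )², where Û_i contains the top d_i left singular vectors of V_i. -/

import Mathlib

open Matrix BigOperators

/-- The Frobenius norm of a real matrix. -/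
noncomputable def frobNorm {m n : Type*} [Fintype m] [Fintype n] (M : Matrix m n ℝ) : ℝ :=
  Real.sqrt (∑ i, ∑ j, (M i j) ^ 2)

/-- The spectral (ℓ²-operator) norm of a real matrix. -/
noncomputable def specNorm {m n : Type*} [Fintype m] [Fintype n] [DecidableEq n]
    (M : Matrix m n ℝ) : ℝ :=
  ‖LinearMap.toContinuousLinearMap (Matrix.toEuclideanLin M)‖

/-- Moore–Penrose pseudoinverse of a full-column-rank matrix: `(MᵀM)⁻¹Mᵀ`. -/
noncomputable def pinvFR {m n : Type*} [Fintype m] [Fintype n] [DecidableEq n]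
    (M : Matrix m n ℝ) : Matrix n m ℝ :=
  (Mᵀ * M)⁻¹ * Mᵀ

/-- The Euclidean norm of a real vector. -/
noncomputable def euclNorm {n : Type*} [Fintype n] (x : n → ℝ) : ℝ :=
  Real.sqrt (∑ i, (x i) ^ 2)

/-!
Fix a block `V`, let `P = ÛÛᵀ` and `Q = C_i C_i†`; both are orthogonal projections of rank `d_i`.
Splitting `(I - Q)V = (I - Q)(I - P)V + (I - Q)P V`, the first term has Frobenius norm at most
`‖(I - P)V‖_F`. For the second, `‖(I - Q)P‖_F² = tr P - tr PQ` is symmetric in `P` and `Q`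
because the traces agree, and `(I - P)Q = ((I - P)C_i)C_i†`, where `‖(I - P)C_i‖_F ≤ ‖(I - P)V‖_F`
since `C_i` consists of columns of `V`. The squared Frobenius norm of `(I - CC†)A` is the sum over
the blocks, each of which is dominated by the single-block error.
-/

section Frobenius

variable {α β γ : Type*} [Fintype α] [Fintype β] [Fintype γ]

attribute [local instance] Matrix.frobeniusNormedAddCommGroup

lemma frobNorm_eq_norm (M : Matrix α β ℝ) : frobNorm M = ‖M‖ := by
  rw [frobNorm, frobenius_norm_def, Real.sqrt_eq_rpow]
  simp

lemma frobNorm_nonneg (M : Matrix α β ℝ) : 0 ≤ frobNorm M := Real.sqrt_nonneg _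

lemma frobNorm_add_le (M N : Matrix α β ℝ) : frobNorm (M + N) ≤ frobNorm M + frobNorm N := by
  simpa only [frobNorm_eq_norm] using norm_add_le M N

lemma frobNorm_sq (M : Matrix α β ℝ) : frobNorm M ^ 2 = ∑ i, ∑ j, M i j ^ 2 :=
  Real.sq_sqrt (by positivity)

lemma frobNorm_sq_eq_sum_norm_row_sq (M : Matrix α β ℝ) :
    frobNorm M ^ 2 = ∑ i, ‖(WithLp.toLp 2 (M i) : EuclideanSpace ℝ β)‖ ^ 2 := by
  simp [frobNorm_sq, EuclideanSpace.norm_sq_eq]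

lemma frobNorm_sq_eq_trace (M : Matrix α β ℝ) : frobNorm M ^ 2 = trace (Mᵀ * M) := by
  rw [frobNorm_sq, trace, Finset.sum_comm]
  simp [Matrix.mul_apply, sq]

lemma frobNorm_submatrix_le (M : Matrix α β ℝ) {f : γ → β} (hf : Function.Injective f) :
    frobNorm (M.submatrix id f) ≤ frobNorm M := by
  refine Real.sqrt_le_sqrt (Finset.sum_le_sum fun i _ => ?_)
  calc ∑ j, M i (f j) ^ 2 = ∑ j ∈ Finset.univ.map ⟨f, hf⟩, M i j ^ 2 :=
        (Finset.sum_map Finset.univ ⟨f, hf⟩ fun j => M i j ^ 2).symm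
    _ ≤ ∑ j, M i j ^ 2 := Finset.sum_le_univ_sum_of_nonneg fun _ => sq_nonneg _

lemma frobNorm_sq_eq_sum_blocks {κ : Type*} [Fintype κ] {ν : κ → Type*} [∀ i, Fintype (ν i)]
    (M : Matrix α (Σ i, ν i) ℝ) :
    frobNorm M ^ 2 = ∑ i, frobNorm (M.submatrix id (Sigma.mk i)) ^ 2 := by
  simp only [frobNorm_sq, submatrix_apply, id_eq, Fintype.sum_sigma]
  exact Finset.sum_comm

end Frobenius

section Spectral

open scoped Matrix.Norms.L2Operator

variable {α β γ : Type*} [Fintype α] [Fintype β] [Fintype γ] [DecidableEq β]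

lemma specNorm_nonneg (M : Matrix α β ℝ) : 0 ≤ specNorm M := norm_nonneg _

lemma norm_toLp_vecMul_le [DecidableEq α] (x : α → ℝ) (M : Matrix α β ℝ) :
    ‖(WithLp.toLp 2 (x ᵥ* M) : EuclideanSpace ℝ β)‖ ≤
      specNorm M * ‖(WithLp.toLp 2 x : EuclideanSpace ℝ α)‖ := by
  have h := l2_opNorm_mulVec Mᵀ (WithLp.toLp 2 x)
  rwa [← conjTranspose_eq_transpose_of_trivial, l2_opNorm_conjTranspose,
    conjTranspose_eq_transpose_of_trivial, mulVec_transpose] at h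

lemma frobNorm_mul_le [DecidableEq α] (M : Matrix γ α ℝ) (N : Matrix α β ℝ) :
    frobNorm (M * N) ≤ frobNorm M * specNorm N := by
  rw [← sq_le_sq₀ (frobNorm_nonneg _) (mul_nonneg (frobNorm_nonneg _) (specNorm_nonneg _)),
    mul_pow, frobNorm_sq_eq_sum_norm_row_sq, frobNorm_sq_eq_sum_norm_row_sq, Finset.sum_mul]
  refine Finset.sum_le_sum fun i _ => ?_
  rw [mul_apply_eq_vecMul, mul_comm, ← mul_pow]
  exact pow_le_pow_left₀ (norm_nonneg _) (norm_toLp_vecMul_le _ _) 2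

end Spectral

namespace IsStarProjection

variable {α β : Type*} [Fintype α] [Fintype β] {P Q : Matrix α α ℝ}

lemma transpose_eq (hP : IsStarProjection P) : Pᵀ = P := by
  simpa [star_eq_conjTranspose, conjTranspose_eq_transpose_of_trivial] using hP.isSelfAdjoint.star_eq

lemma frobNorm_mul_sq (hQ : IsStarProjection Q) (X : Matrix α β ℝ) :
    frobNorm (Q * X) ^ 2 = trace (Xᵀ * (Q * X)) := by
  rw [frobNorm_sq_eq_trace, transpose_mul, hQ.transpose_eq, Matrix.mul_assoc,
    ← Matrix.mul_assoc Q, hQ.isIdempotentElem.eq]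

variable [DecidableEq α]

lemma frobNorm_mul_le (hQ : IsStarProjection Q) (X : Matrix α β ℝ) :
    frobNorm (Q * X) ≤ frobNorm X := by
  have pythagoras : frobNorm X ^ 2 = frobNorm (Q * X) ^ 2 + frobNorm ((1 - Q) * X) ^ 2 := by
    rw [hQ.frobNorm_mul_sq, hQ.one_sub.frobNorm_mul_sq, ← trace_add, ← Matrix.mul_add,
      ← Matrix.add_mul, add_sub_cancel, Matrix.one_mul, frobNorm_sq_eq_trace]
  rw [← sq_le_sq₀ (frobNorm_nonneg _) (frobNorm_nonneg _), pythagoras]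
  exact le_add_of_nonneg_right (sq_nonneg _)

lemma frobNorm_one_sub_mul_sq (hP : IsStarProjection P) (hQ : IsStarProjection Q) :
    frobNorm ((1 - Q) * P) ^ 2 = trace P - trace (Q * P) := by
  rw [hQ.one_sub.frobNorm_mul_sq, hP.transpose_eq, trace_mul_comm, Matrix.mul_assoc,
    hP.isIdempotentElem.eq, Matrix.sub_mul, Matrix.one_mul, trace_sub]

lemma frobNorm_one_sub_mul_comm (hP : IsStarProjection P) (hQ : IsStarProjection Q)
    (htr : trace P = trace Q) : frobNorm ((1 - Q) * P) = frobNorm ((1 - P) * Q) := by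
  rw [← sq_eq_sq₀ (frobNorm_nonneg _) (frobNorm_nonneg _), frobNorm_one_sub_mul_sq hP hQ,
    frobNorm_one_sub_mul_sq hQ hP, htr, trace_mul_comm]

end IsStarProjection

section Projections

variable {α γ : Type*} [Fintype α] [Fintype γ] [DecidableEq γ]

lemma isStarProjection_of_transpose_eq {P : Matrix α α ℝ} (hsymm : Pᵀ = P) (hidem : P * P = P) :
    IsStarProjection P :=
  ⟨hidem, by simpa [IsSelfAdjoint, star_eq_conjTranspose, conjTranspose_eq_transpose_of_trivial]⟩

lemma isStarProjection_mul_transpose_self {U : Matrix α γ ℝ} (hU : Uᵀ * U = 1) :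
    IsStarProjection (U * Uᵀ) :=
  isStarProjection_of_transpose_eq (by rw [transpose_mul, transpose_transpose])
    (by rw [Matrix.mul_assoc, ← Matrix.mul_assoc Uᵀ, hU, Matrix.one_mul])

lemma trace_mul_transpose_self {U : Matrix α γ ℝ} (hU : Uᵀ * U = 1) :
    trace (U * Uᵀ) = Fintype.card γ := by
  rw [trace_mul_comm, hU, trace_one]

lemma isUnit_transpose_mul_self {M : Matrix α γ ℝ} (hM : M.rank = Fintype.card γ) :
    IsUnit (Mᵀ * M) := by
  rw [← mulVec_surjective_iff_isUnit]
  show Function.Surjective (Mᵀ * M).mulVecLin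
  rw [← LinearMap.range_eq_top]
  apply Submodule.eq_top_of_finrank_eq
  rw [← rank, rank_transpose_mul_self, hM, Module.finrank_fintype_fun_eq_card]

lemma pinvFR_mul_self {M : Matrix α γ ℝ} (hM : M.rank = Fintype.card γ) : pinvFR M * M = 1 := by
  rw [pinvFR, Matrix.mul_assoc]
  exact nonsing_inv_mul _ ((isUnit_iff_isUnit_det _).mp (isUnit_transpose_mul_self hM))

lemma isStarProjection_mul_pinvFR {M : Matrix α γ ℝ} (hM : M.rank = Fintype.card γ) :
    IsStarProjection (M * pinvFR M) := by
  refine isStarProjection_of_transpose_eq ?_ ?_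
  · rw [pinvFR, transpose_mul, transpose_mul, transpose_transpose, transpose_nonsing_inv,
      transpose_mul, transpose_transpose, ← Matrix.mul_assoc]
  · rw [Matrix.mul_assoc, ← Matrix.mul_assoc (pinvFR M), pinvFR_mul_self hM, Matrix.one_mul]

lemma trace_mul_pinvFR {M : Matrix α γ ℝ} (hM : M.rank = Fintype.card γ) :
    trace (M * pinvFR M) = Fintype.card γ := by
  rw [trace_mul_comm, pinvFR_mul_self hM, trace_one]

end Projections

section BlockBound

variable {α β γ : Type*} [Fintype α] [Fintype β] [Fintype γ] [DecidableEq α] [DecidableEq β]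
  [DecidableEq γ]

lemma frobNorm_one_sub_mul_le_add {Q : Matrix α α ℝ} (hQ : IsStarProjection Q)
    (P : Matrix α α ℝ) (V : Matrix α β ℝ) :
    frobNorm ((1 - Q) * V) ≤ frobNorm ((1 - P) * V) + frobNorm ((1 - Q) * P) * specNorm V := by
  have hsplit : (1 - Q) * V = (1 - Q) * ((1 - P) * V) + (1 - Q) * P * V := by
    rw [Matrix.mul_assoc, ← Matrix.mul_add, ← Matrix.add_mul, sub_add_cancel, Matrix.one_mul]
  rw [hsplit]
  exact (frobNorm_add_le _ _).trans
    (add_le_add (hQ.one_sub.frobNorm_mul_le _) (frobNorm_mul_le _ _))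

lemma frobNorm_one_sub_mul_pinvFR_mul_le {P : Matrix α α ℝ} (hP : IsStarProjection P)
    {C : Matrix α γ ℝ} (hC : C.rank = Fintype.card γ) (htr : trace P = Fintype.card γ) :
    frobNorm ((1 - C * pinvFR C) * P) ≤ frobNorm ((1 - P) * C) * specNorm (pinvFR C) := by
  have hQ := isStarProjection_mul_pinvFR hC
  have htrQ : trace P = trace (C * pinvFR C) := by rw [htr, trace_mul_pinvFR hC]
  rw [hP.frobNorm_one_sub_mul_comm hQ htrQ, ← Matrix.mul_assoc]
  exact frobNorm_mul_le _ _

lemma frobNorm_one_sub_mul_pinvFR_submatrix_le (V : Matrix α β ℝ) {f : γ → β}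
    (hf : Function.Injective f) (hrank : (V.submatrix id f).rank = Fintype.card γ)
    {U : Matrix α γ ℝ} (hU : Uᵀ * U = 1) :
    frobNorm ((1 - V.submatrix id f * pinvFR (V.submatrix id f)) * V) ≤
      frobNorm ((1 - U * Uᵀ) * V) *
        (1 + specNorm (pinvFR (V.submatrix id f)) * specNorm V) := by
  set C := V.submatrix id f
  have hcols : frobNorm ((1 - U * Uᵀ) * C) ≤ frobNorm ((1 - U * Uᵀ) * V) := by
    have hsub : (1 - U * Uᵀ) * C = ((1 - U * Uᵀ) * V).submatrix id f := by ext; rfl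
    rw [hsub]
    exact frobNorm_submatrix_le _ hf
  have hdiscrepancy : frobNorm ((1 - C * pinvFR C) * (U * Uᵀ)) ≤
      frobNorm ((1 - U * Uᵀ) * V) * specNorm (pinvFR C) :=
    (frobNorm_one_sub_mul_pinvFR_mul_le (isStarProjection_mul_transpose_self hU) hrank
      (trace_mul_transpose_self hU)).trans
      (mul_le_mul_of_nonneg_right hcols (specNorm_nonneg _))
  calc frobNorm ((1 - C * pinvFR C) * V)
      ≤ frobNorm ((1 - U * Uᵀ) * V) + frobNorm ((1 - C * pinvFR C) * (U * Uᵀ)) * specNorm V :=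
        frobNorm_one_sub_mul_le_add (isStarProjection_mul_pinvFR hrank) _ V
    _ ≤ frobNorm ((1 - U * Uᵀ) * V) +
          frobNorm ((1 - U * Uᵀ) * V) * specNorm (pinvFR C) * specNorm V :=
        add_le_add le_rfl (mul_le_mul_of_nonneg_right hdiscrepancy (specNorm_nonneg V))
    _ = frobNorm ((1 - U * Uᵀ) * V) * (1 + specNorm (pinvFR C) * specNorm V) := by ring

end BlockBound

theorem partitioned_cssp_blockwise_bound_general {m k : ℕ} (nn d : Fin k → ℕ)
    (A : Matrix (Fin m) ((i : Fin k) × Fin (nn i)) ℝ)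
    (C : Matrix (Fin m) ((i : Fin k) × Fin (d i)) ℝ)
    (hsel : ∀ i, ∃ f : Fin (d i) → Fin (nn i), Function.Injective f ∧
      C.submatrix id (Sigma.mk i) = (A.submatrix id (Sigma.mk i)).submatrix id f)
    (hrankCi : ∀ i, (C.submatrix id (Sigma.mk i)).rank = d i)
    (Uh : (i : Fin k) → Matrix (Fin m) (Fin (d i)) ℝ)
    (hUh : ∀ i, (Uh i)ᵀ * Uh i = 1)
    (hdom : ∀ i, frobNorm ((1 - C * pinvFR C) * A.submatrix id (Sigma.mk i)) ≤
      frobNorm ((1 - C.submatrix id (Sigma.mk i) * pinvFR (C.submatrix id (Sigma.mk i))) *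
        A.submatrix id (Sigma.mk i))) :
    frobNorm ((1 - C * pinvFR C) * A) ^ 2 ≤
      ∑ i, (frobNorm ((1 - Uh i * (Uh i)ᵀ) * A.submatrix id (Sigma.mk i)) *
        (1 + specNorm (pinvFR (C.submatrix id (Sigma.mk i))) *
          specNorm (A.submatrix id (Sigma.mk i)))) ^ 2 := by
  rw [frobNorm_sq_eq_sum_blocks]
  refine Finset.sum_le_sum fun i _ => pow_le_pow_left₀ (frobNorm_nonneg _) ?_ 2
  obtain ⟨f, hf, hCf⟩ := hsel i
  have hrank : (C.submatrix id (Sigma.mk i)).rank = Fintype.card (Fin (d i)) := by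
    rw [hrankCi i, Fintype.card_fin]
  have hdom_i := hdom i
  rw [hCf] at hrank hdom_i ⊢
  exact hdom_i.trans (frobNorm_one_sub_mul_pinvFR_submatrix_le _ hf hrank (hUh i))

/-- blockwise CSSP error bound: `‖(I - CC†)A‖_F² ≤
Σᵢ (‖(I - ÛᵢÛᵢᵀ)Vᵢ‖_F (1 + ‖Cᵢ†‖₂‖Vᵢ‖₂))²`. -/
theorem partitioned_cssp_blockwise_bound {m k : ℕ} (nn d : Fin k → ℕ)
    (A : Matrix (Fin m) ((i : Fin k) × Fin (nn i)) ℝ)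
    (C : Matrix (Fin m) ((i : Fin k) × Fin (d i)) ℝ)
    (hrankC : C.rank = Fintype.card ((i : Fin k) × Fin (d i)))
    (hsel : ∀ i, ∃ f : Fin (d i) → Fin (nn i), Function.Injective f ∧
      C.submatrix id (Sigma.mk i) = (A.submatrix id (Sigma.mk i)).submatrix id f)
    (hrankCi : ∀ i, (C.submatrix id (Sigma.mk i)).rank = d i)
    (Uh : (i : Fin k) → Matrix (Fin m) (Fin (d i)) ℝ)
    (hUh : ∀ i, (Uh i)ᵀ * Uh i = 1)
    (hEY : ∀ i, ∀ P : Matrix (Fin m) (Fin (d i)) ℝ, Pᵀ * P = 1 →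
      frobNorm ((1 - Uh i * (Uh i)ᵀ) * A.submatrix id (Sigma.mk i)) ≤
        frobNorm ((1 - P * Pᵀ) * A.submatrix id (Sigma.mk i)))
    (hdom : ∀ i, frobNorm ((1 - C * pinvFR C) * A.submatrix id (Sigma.mk i)) ≤
      frobNorm ((1 - C.submatrix id (Sigma.mk i) * pinvFR (C.submatrix id (Sigma.mk i))) *
        A.submatrix id (Sigma.mk i))) :
    frobNorm ((1 - C * pinvFR C) * A) ^ 2 ≤
      ∑ i, (frobNorm ((1 - Uh i * (Uh i)ᵀ) * A.submatrix id (Sigma.mk i)) *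
        (1 + specNorm (pinvFR (C.submatrix id (Sigma.mk i))) *
          specNorm (A.submatrix id (Sigma.mk i)))) ^ 2 :=
  partitioned_cssp_blockwise_bound_general nn d A C hsel hrankCi Uh hUh hdom
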